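/- Let A be a C*-algebra and B ⊂ M(A) a C*-subalgebra. Suppose there exist projections P₁ ≤ P₂ ≤ ⋯ in B with P_n a → a for all a ∈ A. Then the element a = Σ_{n≥0} 2^{−n}(P_{n+1} − P_n) (with P₀ = 0) is a strictly positive element of A-closure with countable spectrum contained in {0} ∪ {2^{−n} : n ∈ ℕ}, and 1_{[2^{−n},1]}(a) = P_{n+1} for all n. -/

import Mathlib

/-!
The increments `Q k = P (k + 1) - P k` are pairwise orthogonal projections with partial sums
`P N`, so `a = ∑ 2⁻ᵏ Q k` is a "diagonal" element: for real sequences `c → 0` the series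
`∑ c k • Q k` converges in norm with norm at most `sup |c k|`, such series multiply coefficientwise,
and away from `{0} ∪ range c` the resolvent is again of this form. Polynomials vanishing at `0`,
and then by Weierstrass approximation all continuous `f` with `f 0 = 0`, therefore act
coefficientwise: `cfc f (∑ c k • Q k) = ∑ f (c k) • Q k`. On the spectrum the indicator of
`[2⁻ⁿ, 1]` agrees with a continuous ramp, which gives `P (n + 1)`. Finally
`a * ∑_{k < N} 2ᵏ Q k = P N` and `P N x → x` make `a A` dense in `A`.
-/

open Filter Topology Polynomial

lemma exists_polynomial_near_of_continuousOn_of_map_zero {a b : ℝ} (h0 : (0 : ℝ) ∈ Set.Icc a b)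
    {f : ℝ → ℝ} (hf : ContinuousOn f (Set.Icc a b)) (hf0 : f 0 = 0) {ε : ℝ} (hε : 0 < ε) :
    ∃ q : ℝ[X], q.eval 0 = 0 ∧ ∀ x ∈ Set.Icc a b, |q.eval x - f x| < ε := by
  obtain ⟨p, hp⟩ := exists_polynomial_near_of_continuousOn a b f hf (ε / 2) (half_pos hε)
  refine ⟨p - C (p.eval 0), by simp, fun x hx => ?_⟩
  have hp0 := hp 0 h0
  rw [hf0, sub_zero] at hp0
  calc |(p - C (p.eval 0)).eval x - f x| = |(p.eval x - f x) - p.eval 0| := by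
        rw [eval_sub, eval_C, sub_right_comm]
    _ ≤ |p.eval x - f x| + |p.eval 0| := abs_sub _ _
    _ < ε := by linarith [hp x hx]

section Idempotents

variable {R : Type*} [NonUnitalRing R] [Module ℝ R] [SMulCommClass ℝ R R] {Q : ℕ → R}

lemma mul_sum_smul_of_mem (hQ : ∀ k, IsIdempotentElem (Q k))
    (horth : Pairwise fun j k => Q j * Q k = 0) (d : ℕ → ℝ) {s : Finset ℕ} {j : ℕ} (hj : j ∈ s) :
    Q j * ∑ k ∈ s, d k • Q k = d j • Q j := by
  rw [Finset.mul_sum, Finset.sum_eq_single_of_mem j hj fun k _ hkj => ?_]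
  · rw [mul_smul_comm, (hQ j).eq]
  · rw [mul_smul_comm, horth hkj.symm, smul_zero]

lemma sum_smul_mul_sum_smul [IsScalarTower ℝ R R] (hQ : ∀ k, IsIdempotentElem (Q k))
    (horth : Pairwise fun j k => Q j * Q k = 0) (c d : ℕ → ℝ) (s : Finset ℕ) :
    (∑ k ∈ s, c k • Q k) * ∑ k ∈ s, d k • Q k = ∑ k ∈ s, (c k * d k) • Q k := by
  rw [Finset.sum_mul]
  refine Finset.sum_congr rfl fun k hk => ?_
  rw [smul_mul_assoc, mul_sum_smul_of_mem hQ horth d hk, smul_smul]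

lemma isStarProjection_sum [IsScalarTower ℝ R R] [StarRing R] (hQ : ∀ k, IsStarProjection (Q k))
    (horth : Pairwise fun j k => Q j * Q k = 0) (s : Finset ℕ) :
    IsStarProjection (∑ k ∈ s, Q k) where
  isIdempotentElem := show _ * _ = _ by
    simpa using sum_smul_mul_sum_smul (fun k => (hQ k).isIdempotentElem) horth 1 1 s
  isSelfAdjoint := isSelfAdjoint_sum s fun k _ => (hQ k).isSelfAdjoint

end Idempotents

section CStarAlgebra

variable {M : Type*} [CStarAlgebra M] {Q : ℕ → M}

lemma mul_tsum_smul (hQ : ∀ k, IsIdempotentElem (Q k))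
    (horth : Pairwise fun j k => Q j * Q k = 0) {d : ℕ → ℝ} (hd : Summable fun k => d k • Q k)
    (j : ℕ) : Q j * ∑' k, d k • Q k = d j • Q j := by
  rw [← hd.tsum_mul_left, tsum_eq_single j fun k hkj => ?_]
  · rw [mul_smul_comm, (hQ j).eq]
  · rw [mul_smul_comm, horth hkj.symm, smul_zero]

lemma tsum_smul_mul_tsum_smul (hQ : ∀ k, IsIdempotentElem (Q k))
    (horth : Pairwise fun j k => Q j * Q k = 0) {c d : ℕ → ℝ}
    (hc : Summable fun k => c k • Q k) (hd : Summable fun k => d k • Q k) :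
    (∑' k, c k • Q k) * ∑' k, d k • Q k = ∑' k, (c k * d k) • Q k := by
  rw [← hc.tsum_mul_right]
  exact tsum_congr fun k => by rw [smul_mul_assoc, mul_tsum_smul hQ horth hd, smul_smul]

end CStarAlgebra

section OrderedCStarAlgebra

variable {M : Type*} [CStarAlgebra M] [PartialOrder M] [StarOrderedRing M] {Q : ℕ → M}

lemma norm_sum_smul_le (hQ : ∀ k, IsStarProjection (Q k))
    (horth : Pairwise fun j k => Q j * Q k = 0) (s : Finset ℕ) {d : ℕ → ℝ} {C : ℝ} (hC : 0 ≤ C)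
    (hd : ∀ k ∈ s, |d k| ≤ C) : ‖∑ k ∈ s, d k • Q k‖ ≤ C := by
  set x := ∑ k ∈ s, d k • Q k
  have hx : IsSelfAdjoint x :=
    isSelfAdjoint_sum s fun k _ => (IsSelfAdjoint.all (d k)).smul (hQ k).isSelfAdjoint
  have hsq : x * x ≤ algebraMap ℝ M (C ^ 2) :=
    calc x * x = ∑ k ∈ s, (d k * d k) • Q k :=
          sum_smul_mul_sum_smul (fun k => (hQ k).isIdempotentElem) horth d d s
      _ ≤ ∑ k ∈ s, C ^ 2 • Q k := Finset.sum_le_sum fun k hk =>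
          smul_le_smul_of_nonneg_right (by nlinarith [abs_le.mp (hd k hk), abs_nonneg (d k)])
            (hQ k).nonneg
      _ = C ^ 2 • ∑ k ∈ s, Q k := Finset.smul_sum.symm
      _ ≤ C ^ 2 • 1 := smul_le_smul_of_nonneg_left (isStarProjection_sum hQ horth s).le_one
          (sq_nonneg C)
      _ = algebraMap ℝ M (C ^ 2) := (Algebra.algebraMap_eq_smul_one _).symm
  have hnonneg : 0 ≤ x * x := by simpa [hx.star_eq] using star_mul_self_nonneg x
  rw [← pow_le_pow_iff_left₀ (norm_nonneg x) hC two_ne_zero, ← hx.norm_mul_self]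
  exact (CStarAlgebra.norm_le_iff_le_algebraMap _ (sq_nonneg C) hnonneg).mpr hsq

lemma summable_smul_of_tendsto_zero (hQ : ∀ k, IsStarProjection (Q k))
    (horth : Pairwise fun j k => Q j * Q k = 0) {d : ℕ → ℝ} (hd : Tendsto d atTop (𝓝 0)) :
    Summable fun k => d k • Q k := by
  refine summable_iff_vanishing_norm.mpr fun ε hε => ?_
  obtain ⟨N, hN⟩ := (Metric.tendsto_atTop.mp hd) (ε / 2) (half_pos hε)
  refine ⟨Finset.range N, fun t ht => ?_⟩
  refine (norm_sum_smul_le hQ horth t (half_pos hε).le fun k hk => ?_).trans_lt (half_lt_self hε)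
  have hkN : N ≤ k := by simpa using Finset.disjoint_left.mp ht hk
  simpa using (hN k hkN).le

lemma norm_tsum_smul_le (hQ : ∀ k, IsStarProjection (Q k))
    (horth : Pairwise fun j k => Q j * Q k = 0) {d : ℕ → ℝ} (hd : Summable fun k => d k • Q k)
    {C : ℝ} (hC : 0 ≤ C) (hdC : ∀ k, |d k| ≤ C) : ‖∑' k, d k • Q k‖ ≤ C :=
  le_of_tendsto' hd.hasSum.norm fun s => norm_sum_smul_le hQ horth s hC fun k _ => hdC k

lemma algebraMap_add_tsum_smul_mul (hQ : ∀ k, IsStarProjection (Q k))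
    (horth : Pairwise fun j k => Q j * Q k = 0) {c d : ℕ → ℝ}
    (hc : Tendsto c atTop (𝓝 0)) (hd : Tendsto d atTop (𝓝 0)) (r s : ℝ) :
    (algebraMap ℝ M r + ∑' k, c k • Q k) * (algebraMap ℝ M s + ∑' k, d k • Q k) =
      algebraMap ℝ M (r * s) + ∑' k, (r * d k + s * c k + c k * d k) • Q k := by
  have hsum {e : ℕ → ℝ} (he : Tendsto e atTop (𝓝 0)) := summable_smul_of_tendsto_zero hQ horth he
  have hrd := hsum (by simpa using hd.const_mul r)
  have hsc := hsum (by simpa using hc.const_mul s)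
  have hcd := hsum (by simpa using hc.mul hd)
  rw [add_mul, mul_add, mul_add, ← map_mul, ← Algebra.smul_def, ← Algebra.commutes,
    ← Algebra.smul_def, tsum_smul_mul_tsum_smul (fun k => (hQ k).isIdempotentElem) horth
      (hsum hc) (hsum hd), ← (hsum hd).tsum_const_smul, ← (hsum hc).tsum_const_smul, add_assoc]
  simp only [smul_smul, add_smul]
  rw [(hrd.add hsc).tsum_add hcd, hrd.tsum_add hsc, add_assoc]

lemma spectrum_tsum_smul_subset (hQ : ∀ k, IsStarProjection (Q k))
    (horth : Pairwise fun j k => Q j * Q k = 0) {c : ℕ → ℝ} (hc : Tendsto c atTop (𝓝 0)) :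
    spectrum ℝ (∑' k, c k • Q k) ⊆ insert 0 (Set.range c) := by
  intro x hx
  by_contra hxc
  simp only [Set.mem_insert_iff, Set.mem_range, not_or, not_exists] at hxc
  obtain ⟨hx0, hxc⟩ := hxc
  -- the resolvent at `x` is `x⁻¹ + ∑ ((x - c k)⁻¹ - x⁻¹) • Q k`
  set e : ℕ → ℝ := fun k => (x - c k)⁻¹ - x⁻¹
  have he : Tendsto e atTop (𝓝 0) := by
    have hcont : ContinuousAt (fun t : ℝ => (x - t)⁻¹ - x⁻¹) 0 :=
      ((continuousAt_const.sub continuousAt_id).inv₀ (by simpa using hx0)).sub continuousAt_const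
    simpa [e, Function.comp_def] using hcont.tendsto.comp hc
  have hcoeff : ∀ k, x * e k + x⁻¹ * -c k + -c k * e k = 0 := fun k => by
    have : x - c k ≠ 0 := sub_ne_zero.mpr fun h => hxc k h.symm
    simp only [e]
    field_simp
    ring
  have hneg : algebraMap ℝ M x - ∑' k, c k • Q k = algebraMap ℝ M x + ∑' k, -c k • Q k := by
    simp only [neg_smul, tsum_neg, sub_eq_add_neg]
  have hmul := algebraMap_add_tsum_smul_mul hQ horth (by simpa using hc.neg) he x x⁻¹
  have hmul' := algebraMap_add_tsum_smul_mul hQ horth he (by simpa using hc.neg) x⁻¹ x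
  have hcoeff' : ∀ k, x⁻¹ * -c k + x * e k + e k * -c k = 0 := fun k => by
    rw [← hcoeff k]; ring
  simp only [mul_inv_cancel₀ hx0, inv_mul_cancel₀ hx0, map_one, hcoeff, hcoeff', zero_smul,
    tsum_zero, add_zero] at hmul hmul'
  exact spectrum.mem_iff.mp hx (hneg ▸ ⟨⟨_, _, hmul, hmul'⟩, rfl⟩)

lemma tsum_smul_mul_aeval (hQ : ∀ k, IsStarProjection (Q k))
    (horth : Pairwise fun j k => Q j * Q k = 0) {c : ℕ → ℝ} (hc : Tendsto c atTop (𝓝 0))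
    (q : ℝ[X]) :
    (∑' k, c k • Q k) * aeval (∑' k, c k • Q k) q = ∑' k, (c k * q.eval (c k)) • Q k := by
  have hsum (p : ℝ[X]) : Summable fun k => (c k * p.eval (c k)) • Q k :=
    summable_smul_of_tendsto_zero hQ horth <| by
      simpa using hc.mul ((p.continuous.tendsto 0).comp hc)
  induction q using Polynomial.induction_on with
  | C r =>
    rw [aeval_C, ← Algebra.commutes, ← Algebra.smul_def, ← Summable.tsum_const_smul _
      (summable_smul_of_tendsto_zero hQ horth hc)]
    simp only [smul_smul, eval_C, mul_comm]
  | add p p' hp hp' =>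
    rw [map_add, mul_add, hp, hp', ← (hsum p).tsum_add (hsum p')]
    simp only [eval_add, mul_add, add_smul]
  | monomial n r h =>
    rw [pow_succ, ← mul_assoc, map_mul, aeval_X, ← mul_assoc, h,
      tsum_smul_mul_tsum_smul (fun k => (hQ k).isIdempotentElem) horth (hsum _)
        (summable_smul_of_tendsto_zero hQ horth hc)]
    simp only [eval_mul, eval_C, eval_pow, eval_X]
    exact tsum_congr fun k => by ring_nf

lemma aeval_tsum_smul (hQ : ∀ k, IsStarProjection (Q k))
    (horth : Pairwise fun j k => Q j * Q k = 0) {c : ℕ → ℝ} (hc : Tendsto c atTop (𝓝 0))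
    {q : ℝ[X]} (hq : q.eval 0 = 0) :
    aeval (∑' k, c k • Q k) q = ∑' k, q.eval (c k) • Q k := by
  have hX : X * q.divX = q := by simpa [coeff_zero_eq_eval_zero, hq] using X_mul_divX_add q
  conv_lhs => rw [← hX, map_mul, aeval_X, tsum_smul_mul_aeval hQ horth hc]
  conv_rhs => rw [← hX]
  simp only [eval_mul, eval_X]

lemma cfc_tsum_smul (hQ : ∀ k, IsStarProjection (Q k))
    (horth : Pairwise fun j k => Q j * Q k = 0) {c : ℕ → ℝ} (hc : Tendsto c atTop (𝓝 0))
    {f : ℝ → ℝ} (hf : Continuous f) (hf0 : f 0 = 0) :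
    cfc f (∑' k, c k • Q k) = ∑' k, f (c k) • Q k := by
  set a := ∑' k, c k • Q k
  have ha : IsSelfAdjoint a := by
    refine (tsum_star (f := fun k => c k • Q k)).trans (tsum_congr fun k => ?_)
    exact ((IsSelfAdjoint.all (c k)).smul (hQ k).isSelfAdjoint).star_eq
  have hsum {g : ℝ → ℝ} (hg : Continuous g) (hg0 : g 0 = 0) : Summable fun k => g (c k) • Q k :=
    summable_smul_of_tendsto_zero hQ horth <| by
      simpa [hg0, Function.comp_def] using (hg.tendsto 0).comp hc
  obtain ⟨R, hR⟩ := isBounded_iff_forall_norm_le.mp (Metric.isBounded_range_of_tendsto c hc)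
  have hcR (k : ℕ) : c k ∈ Set.Icc (-R) R := abs_le.mp (hR _ ⟨k, rfl⟩)
  have h0R : (0 : ℝ) ∈ Set.Icc (-R) R := by
    constructor <;> linarith [(hcR 0).1, (hcR 0).2]
  have hspec : spectrum ℝ a ⊆ Set.Icc (-R) R := (spectrum_tsum_smul_subset hQ horth hc).trans
    (Set.insert_subset h0R (Set.range_subset_iff.mpr hcR))
  refine eq_of_forall_dist_le fun ε hε => ?_
  obtain ⟨q, hq0, hq⟩ :=
    exists_polynomial_near_of_continuousOn_of_map_zero h0R hf.continuousOn hf0 (half_pos hε)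
  have hcfc : cfc q.eval a = ∑' k, q.eval (c k) • Q k :=
    (cfc_polynomial q a).trans (aeval_tsum_smul hQ horth hc hq0)
  calc dist (cfc f a) (∑' k, f (c k) • Q k)
      ≤ dist (cfc f a) (cfc q.eval a) + dist (cfc q.eval a) (∑' k, f (c k) • Q k) :=
        dist_triangle _ _ _
    _ ≤ ε / 2 + ε / 2 := by
        gcongr
        · rw [dist_eq_norm, ← cfc_sub f q.eval a]
          refine norm_cfc_le (half_pos hε).le fun t ht => ?_
          rw [Real.norm_eq_abs, abs_sub_comm]
          exact (hq t (hspec ht)).le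
        · rw [hcfc, dist_eq_norm, ← (hsum q.continuous hq0).tsum_sub (hsum hf hf0)]
          simp only [← sub_smul]
          exact norm_tsum_smul_le hQ horth (hsum (q.continuous.sub hf) (by simp [hq0, hf0]))
            (half_pos hε).le fun k => (hq _ (hcR k)).le
    _ = ε := add_halves ε

end OrderedCStarAlgebra

lemma closure_image_mul_eq {R : Type*} [Semigroup R] [TopologicalSpace R] {A : Set R}
    (hA : IsClosed A) (hideal : ∀ m, ∀ x ∈ A, m * x ∈ A) {a : R} {u : ℕ → R}
    (hu : ∀ n, ∃ b, a * b = u n) (happrox : ∀ x ∈ A, Tendsto (fun n => u n * x) atTop (𝓝 x)) :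
    closure ((fun x => a * x) '' A) = A := by
  refine (closure_minimal ?_ hA).antisymm fun x hx => ?_
  · rintro _ ⟨x, hx, rfl⟩
    exact hideal a x hx
  · refine mem_closure_of_tendsto (happrox x hx) (Eventually.of_forall fun n => ?_)
    obtain ⟨b, hb⟩ := hu n
    exact ⟨b * x, hideal b x hx, by rw [← hb, mul_assoc]⟩

lemma tsum_ite_mem_range_smul_succ_sub {E : Type*} [AddCommGroup E] [Module ℝ E]
    [TopologicalSpace E] {P : ℕ → E} (hP0 : P 0 = 0) (N : ℕ) :
    ∑' k, (if k ∈ Finset.range N then (1 : ℝ) else 0) • (P (k + 1) - P k) = P N := by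
  rw [tsum_eq_sum fun k hk => by rw [if_neg hk, zero_smul]]
  simp_rw [ite_smul, one_smul, zero_smul, Finset.sum_ite_mem, Finset.inter_self,
    Finset.sum_range_sub, hP0, sub_zero]

lemma two_pow_inv_mem_Icc_iff (n k : ℕ) :
    ((2 : ℝ) ^ k)⁻¹ ∈ Set.Icc ((2 ^ n)⁻¹) 1 ↔ k ≤ n := by
  rw [Set.mem_Icc, inv_le_inv₀ (by positivity) (by positivity),
    pow_le_pow_iff_right₀ one_lt_two, and_iff_left (inv_le_one_of_one_le₀ (one_le_pow₀ one_le_two))]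

lemma min_max_two_pow_mul_inv_sub_one (n k : ℕ) :
    min 1 (max 0 (2 ^ (n + 1) * ((2 : ℝ) ^ k)⁻¹ - 1)) = if k ≤ n then 1 else 0 := by
  rw [← div_eq_mul_inv]
  split_ifs with h
  · have : (2 : ℝ) ≤ 2 ^ (n + 1) / 2 ^ k := by
      rw [le_div_iff₀ (by positivity), ← pow_succ']
      exact pow_le_pow_right₀ one_le_two (by omega)
    rw [max_eq_right (by linarith), min_eq_left (by linarith)]
  · have : (2 : ℝ) ^ (n + 1) / 2 ^ k ≤ 1 :=
      (div_le_one (by positivity)).mpr (pow_le_pow_right₀ one_le_two (by omega))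
    rw [max_eq_left (by linarith), min_eq_right zero_le_one]

section MonotoneProjections

variable {M : Type*} [CStarAlgebra M] [PartialOrder M] [StarOrderedRing M] {P : ℕ → M}

lemma isStarProjection_succ_sub (hP : ∀ n, IsStarProjection (P n)) (hmono : Monotone P)
    (k : ℕ) : IsStarProjection (P (k + 1) - P k) :=
  ((hP k).le_iff_sub (hP (k + 1))).mp (hmono k.le_succ)

lemma pairwise_succ_sub_mul_eq_zero (hP : ∀ n, IsStarProjection (P n)) (hmono : Monotone P) :
    Pairwise fun j k => (P (j + 1) - P j) * (P (k + 1) - P k) = 0 := by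
  have hl {i m : ℕ} (h : i ≤ m) : P i * P m = P i :=
    ((hP i).le_iff_mul_eq_left (hP m)).mp (hmono h)
  have hr {i m : ℕ} (h : i ≤ m) : P m * P i = P i :=
    ((hP i).le_iff_mul_eq_right (hP m)).mp (hmono h)
  intro j k hjk
  rcases hjk.lt_or_gt with h | h
  · simp [mul_sub, sub_mul, hl (show j + 1 ≤ k + 1 by omega), hl (show j + 1 ≤ k by omega),
      hl (show j ≤ k + 1 by omega), hl (show j ≤ k by omega)]
  · simp [mul_sub, sub_mul, hr (show k + 1 ≤ j + 1 by omega), hr (show k + 1 ≤ j by omega),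
      hr (show k ≤ j + 1 by omega), hr (show k ≤ j by omega)]

lemma exists_tsum_smul_succ_sub_mul_eq (hP : ∀ n, IsStarProjection (P n)) (hmono : Monotone P)
    (hP0 : P 0 = 0) {c : ℕ → ℝ} (hc : Tendsto c atTop (𝓝 0)) (hc0 : ∀ k, c k ≠ 0) (N : ℕ) :
    ∃ b, (∑' k, c k • (P (k + 1) - P k)) * b = P N := by
  have hQ := isStarProjection_succ_sub hP hmono
  refine ⟨∑' k, (if k ∈ Finset.range N then (c k)⁻¹ else 0) • (P (k + 1) - P k), ?_⟩
  rw [tsum_smul_mul_tsum_smul (fun k => (hQ k).isIdempotentElem)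
      (pairwise_succ_sub_mul_eq_zero hP hmono)
      (summable_smul_of_tendsto_zero hQ (pairwise_succ_sub_mul_eq_zero hP hmono) hc)
      (summable_of_ne_finset_zero fun k hk => by rw [if_neg hk, zero_smul]),
    ← tsum_ite_mem_range_smul_succ_sub hP0]
  exact tsum_congr fun k => by split_ifs <;> simp [hc0 k]

lemma cfc_indicator_Icc_tsum_two_pow_inv_smul (hP : ∀ n, IsStarProjection (P n))
    (hmono : Monotone P) (hP0 : P 0 = 0) (n : ℕ) :
    cfc (Set.indicator (Set.Icc (((2 : ℝ) ^ n)⁻¹) 1) (fun _ => (1 : ℝ)))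
      (∑' k, ((2 : ℝ) ^ k)⁻¹ • (P (k + 1) - P k)) = P (n + 1) := by
  have hQ := isStarProjection_succ_sub hP hmono
  have horth := pairwise_succ_sub_mul_eq_zero hP hmono
  have hw : Tendsto (fun k : ℕ => ((2 : ℝ) ^ k)⁻¹) atTop (𝓝 0) :=
    tendsto_inv_atTop_zero.comp (tendsto_pow_atTop_atTop_of_one_lt one_lt_two)
  rw [cfc_congr (g := fun t => min 1 (max 0 (2 ^ (n + 1) * t - 1))) fun t ht => ?_,
    cfc_tsum_smul hQ horth hw (by fun_prop) (by norm_num)]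
  · simp only [min_max_two_pow_mul_inv_sub_one, ← Finset.mem_range_succ_iff]
    exact tsum_ite_mem_range_smul_succ_sub hP0 (n + 1)
  rcases spectrum_tsum_smul_subset hQ horth hw ht with rfl | ⟨k, rfl⟩
  · rw [Set.indicator_of_notMem fun h => (h.1.trans_lt' (by positivity)).false]
    norm_num
  · simp only [Set.indicator_apply, two_pow_inv_mem_Icc_iff, min_max_two_pow_mul_inv_sub_one]

end MonotoneProjections

theorem stmt5_general {M : Type*} [CStarAlgebra M] [PartialOrder M] [StarOrderedRing M]
    (A : NonUnitalStarSubalgebra ℂ M) (hAclosed : IsClosed (A : Set M))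
    (hAideal : ∀ m : M, ∀ a ∈ A, m * a ∈ A ∧ a * m ∈ A)
    (P : ℕ → M) (hP0 : P 0 = 0)
    (hproj : ∀ n, IsSelfAdjoint (P n) ∧ IsIdempotentElem (P n))
    (hmono : Monotone P)
    (happrox : ∀ a ∈ A, Tendsto (fun n => P n * a) atTop (𝓝 a)) :
    0 ≤ (∑' n : ℕ, (((2 : ℂ) ^ n)⁻¹) • (P (n + 1) - P n)) ∧
    closure ((fun x => (∑' n : ℕ, (((2 : ℂ) ^ n)⁻¹) • (P (n + 1) - P n)) * x) '' (A : Set M))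
      = (A : Set M) ∧
    spectrum ℝ (∑' n : ℕ, (((2 : ℂ) ^ n)⁻¹) • (P (n + 1) - P n))
      ⊆ {0} ∪ Set.range (fun n : ℕ => ((2 : ℝ) ^ n)⁻¹) ∧
    ∀ n : ℕ,
      cfc (Set.indicator (Set.Icc (((2 : ℝ) ^ n)⁻¹) 1) (fun _ => (1 : ℝ)))
          (∑' n : ℕ, (((2 : ℂ) ^ n)⁻¹) • (P (n + 1) - P n))
        = P (n + 1) := by
  have hP (n : ℕ) : IsStarProjection (P n) := ⟨(hproj n).2, (hproj n).1⟩
  have hQ := isStarProjection_succ_sub hP hmono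
  have hw : Tendsto (fun k : ℕ => ((2 : ℝ) ^ k)⁻¹) atTop (𝓝 0) :=
    tendsto_inv_atTop_zero.comp (tendsto_pow_atTop_atTop_of_one_lt one_lt_two)
  have hreal : ∑' n : ℕ, ((2 : ℂ) ^ n)⁻¹ • (P (n + 1) - P n) =
      ∑' k, ((2 : ℝ) ^ k)⁻¹ • (P (k + 1) - P k) :=
    tsum_congr fun k => by rw [← Complex.coe_smul]; simp
  rw [hreal, ← Set.insert_eq]
  exact ⟨tsum_nonneg fun k => smul_nonneg (by positivity) (hQ k).nonneg,
    closure_image_mul_eq hAclosed (fun m a ha => (hAideal m a ha).1)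
      (exists_tsum_smul_succ_sub_mul_eq hP hmono hP0 hw (fun k => by positivity)) happrox,
    spectrum_tsum_smul_subset hQ (pairwise_succ_sub_mul_eq_zero hP hmono) hw,
    cfc_indicator_Icc_tsum_two_pow_inv_smul hP hmono hP0⟩

/-- Let `A` be a closed two-sided ideal in a unital C*-algebra `M` (playing the role of
`M(A)`) and `B ⊆ M` a C*-subalgebra.  If `P₁ ≤ P₂ ≤ ⋯` are projections in `B` with
`Pₙ a → a` for all `a ∈ A` (and `P₀ = 0`), then `a₀ = Σₙ 2⁻ⁿ (P_{n+1} − Pₙ)` is a positive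
strictly positive element for `A` (the closure of `a₀·A` is `A`) whose spectrum is contained
in the countable set `{0} ∪ {2⁻ⁿ}`, and whose spectral projections satisfy
`1_{[2⁻ⁿ,1]}(a₀) = P_{n+1}` for all `n`. -/
theorem stmt5 {M : Type*} [CStarAlgebra M] [PartialOrder M] [StarOrderedRing M]
    (A : NonUnitalStarSubalgebra ℂ M) (hAclosed : IsClosed (A : Set M))
    (hAideal : ∀ m : M, ∀ a ∈ A, m * a ∈ A ∧ a * m ∈ A)
    (B : StarSubalgebra ℂ M) (hBclosed : IsClosed (B : Set M))
    (P : ℕ → M) (hP0 : P 0 = 0) (hPB : ∀ n, P n ∈ B)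
    (hproj : ∀ n, IsSelfAdjoint (P n) ∧ IsIdempotentElem (P n))
    (hmono : Monotone P)
    (happrox : ∀ a ∈ A, Tendsto (fun n => P n * a) atTop (𝓝 a)) :
    0 ≤ (∑' n : ℕ, (((2 : ℂ) ^ n)⁻¹) • (P (n + 1) - P n)) ∧
    closure ((fun x => (∑' n : ℕ, (((2 : ℂ) ^ n)⁻¹) • (P (n + 1) - P n)) * x) '' (A : Set M))
      = (A : Set M) ∧
    spectrum ℝ (∑' n : ℕ, (((2 : ℂ) ^ n)⁻¹) • (P (n + 1) - P n))
      ⊆ {0} ∪ Set.range (fun n : ℕ => ((2 : ℝ) ^ n)⁻¹) ∧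
    ∀ n : ℕ,
      cfc (Set.indicator (Set.Icc (((2 : ℝ) ^ n)⁻¹) 1) (fun _ => (1 : ℝ)))
          (∑' n : ℕ, (((2 : ℂ) ^ n)⁻¹) • (P (n + 1) - P n))
        = P (n + 1) :=
  stmt5_general A hAclosed hAideal P hP0 hproj hmono happrox
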